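/- Let D : A → A be the ℂ-linear operator on A = MvPolynomial (Fin (2n)) (Polynomial ℂ) given by D f = 2ℏ · (∂f/∂ℏ) + ∑_{i ∈ Fin(2n)} y_i · (∂f/∂y_i), where ∂/∂ℏ differentiates the ℂ[ℏ]-coefficients. Then D is a derivation of the Moyal product: D(f ⋆ g) = (D f) ⋆ g + f ⋆ (D g) for all f, g ∈ A. Equivalently, the Moyal product is graded for the weight assignment wt(y_i) = 1, wt(ℏ) = 2: the Moyal product of weight-homogeneous elements of weights a and b is weight-homogeneous of weight a + b. (Infinitesimally this is the identity ℏ∂_ℏ m_ℏ + [𝔼, m_ℏ] = 0 for the Euler vector field, used in the Gauss–Manin argument.) -/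

import Mathlib

noncomputable section

/-- The polynomial Weyl algebra carrier: polynomials in `y₀, …, y_{2n−1}` with
coefficients in `ℂ[ℏ]` (where `ℏ = Polynomial.X`). -/
abbrev WeylPoly (n : ℕ) := MvPolynomial (Fin (2*n)) (Polynomial ℂ)

/-- The standard symplectic matrix `ω̂`: `ω̂(i,j) = 1` if `j = i + n`, `−1` if
`i = j + n`, and `0` otherwise. -/
def omegaHat (n : ℕ) (i j : Fin (2*n)) : ℂ :=
  if (j : ℕ) = (i : ℕ) + n then 1 else if (i : ℕ) = (j : ℕ) + n then -1 else 0

/-- Iterated partial derivative `∂_{v 0} ⋯ ∂_{v (m−1)}`. -/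
def multiDeriv {n m : ℕ} (v : Fin m → Fin (2*n)) (f : WeylPoly n) : WeylPoly n :=
  (List.ofFn v).foldr (fun i g => MvPolynomial.pderiv i g) f

/-- The Moyal product
`f ⋆ g = ∑_{m} (ℏ^m / (2^m m!)) ∑_{i₁,…,i_m} ∑_{j₁,…,j_m} (∏_s ω̂(i_s, j_s)) ·
(∂_{i₁} ⋯ ∂_{i_m} f) · (∂_{j₁} ⋯ ∂_{j_m} g)`; the sum over `m` is truncated at
`totalDegree f`, beyond which all terms vanish. -/
def moyal (n : ℕ) (f g : WeylPoly n) : WeylPoly n :=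
  ∑ m ∈ Finset.range (f.totalDegree + 1),
    MvPolynomial.C (Polynomial.C (1 / ((2:ℂ)^m * (Nat.factorial m : ℂ))) * Polynomial.X ^ m) *
      ∑ v : Fin m → Fin (2*n), ∑ w : Fin m → Fin (2*n),
        MvPolynomial.C (Polynomial.C (∏ s : Fin m, omegaHat n (v s) (w s))) *
          (multiDeriv v f * multiDeriv w g)

/-- Coefficientwise derivative in `ℏ`: apply `Polynomial.derivative` to each
`ℂ[ℏ]`-coefficient of a polynomial in the `y`-variables. -/
def hbarDeriv (n : ℕ) (f : WeylPoly n) : WeylPoly n :=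
  AddMonoidAlgebra.ofCoeff
    (Finsupp.mapRange (fun p => Polynomial.derivative p) (by simp) (AddMonoidAlgebra.coeff f))

/-- The Euler operator `D f = 2ℏ ∂f/∂ℏ + ∑_i y_i ∂f/∂y_i`. -/
def eulerOp (n : ℕ) (f : WeylPoly n) : WeylPoly n :=
  2 • (MvPolynomial.C Polynomial.X * hbarDeriv n f)
    + ∑ i : Fin (2*n), MvPolynomial.X i * MvPolynomial.pderiv i f


/-!
Both `eulerOp` and each `∂_i` are derivations of the commutative product, and `[∂_i, D] = ∂_i`,
as one checks on the generators `y_j` and on the coefficients. Hence an `m`-fold derivative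
shifts `D` by `m`, `∂^v (D f) = D (∂^v f) + m ∂^v f`, so `D` applied to the `m`-th bidifferential
term `B_m(f, g)` of the Moyal product gives `B_m(D f, g) + B_m(f, D g) - 2m B_m(f, g)`. The deficit
is exactly compensated by the prefactor: `D ℏ^m = 2ℏ ∂_ℏ ℏ^m = 2m ℏ^m`.
-/

namespace MvPolynomial

variable {σ R : Type*} [CommSemiring R]

theorem totalDegree_pderiv_le (i : σ) (f : MvPolynomial σ R) :
    (pderiv i f).totalDegree ≤ f.totalDegree - 1 := by
  classical
  refine Finset.sup_le fun s hs => ?_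
  rw [mem_support_iff, coeff_pderiv] at hs
  have hf := le_totalDegree (mem_support_iff.mpr (left_ne_zero_of_mul hs))
  rw [Finsupp.sum_add_index' (by simp) (by simp), Finsupp.sum_single_index rfl] at hf
  omega

theorem totalDegree_foldr_pderiv_le (l : List σ) (f : MvPolynomial σ R) :
    (l.foldr (fun i g => pderiv i g) f).totalDegree ≤ f.totalDegree - l.length := by
  induction l with
  | nil => simp
  | cons i l ih =>
    have := totalDegree_pderiv_le i (l.foldr (fun i g => pderiv i g) f)
    simp only [List.foldr_cons, List.length_cons]
    omega

theorem foldr_pderiv_eq_zero_of_totalDegree_lt {l : List σ} {f : MvPolynomial σ R}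
    (h : f.totalDegree < l.length) : l.foldr (fun i g => pderiv i g) f = 0 := by
  obtain _ | ⟨i, l⟩ := l
  · simp at h
  · have hconst := totalDegree_foldr_pderiv_le l f
    rw [List.length_cons] at h
    rw [List.foldr_cons, (totalDegree_eq_zero_iff_eq_C (p := l.foldr _ f)).mp (by omega), pderiv_C]

theorem foldr_pderiv_of_commutator_eq_pderiv {D : MvPolynomial σ R → MvPolynomial σ R}
    (hD : ∀ i f, pderiv i (D f) = D (pderiv i f) + pderiv i f) (l : List σ) (f : MvPolynomial σ R) :
    l.foldr (fun i g => pderiv i g) (D f)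
      = D (l.foldr (fun i g => pderiv i g) f) + l.length • l.foldr (fun i g => pderiv i g) f := by
  induction l with
  | nil => simp
  | cons i l ih =>
    simp only [List.foldr_cons, List.length_cons, ih, map_add, map_nsmul, hD, succ_nsmul]
    abel

theorem derivation_ext_of_C_X {S M : Type*} [CommSemiring S] [Algebra S R] [AddCommMonoid M]
    [Module (MvPolynomial σ R) M] [Module S M] [IsScalarTower S (MvPolynomial σ R) M]
    {D₁ D₂ : Derivation S (MvPolynomial σ R) M}
    (hC : ∀ a, D₁ (C a) = D₂ (C a)) (hX : ∀ i, D₁ (X i) = D₂ (X i)) : D₁ = D₂ := by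
  ext f
  induction f using MvPolynomial.induction_on with
  | C a => exact hC a
  | add p q hp hq => rw [map_add, map_add, hp, hq]
  | mul_X p i hp => rw [Derivation.leibniz, Derivation.leibniz, hp, hX]

end MvPolynomial

section Euler

open MvPolynomial

variable {n : ℕ}

theorem hbarDeriv_add (f g : WeylPoly n) :
    hbarDeriv n (f + g) = hbarDeriv n f + hbarDeriv n g :=
  congrArg AddMonoidAlgebra.ofCoeff (Finsupp.mapRange_add (by simp) _ _)

theorem hbarDeriv_monomial (s : Fin (2*n) →₀ ℕ) (a : Polynomial ℂ) :
    hbarDeriv n (monomial s a) = monomial s (Polynomial.derivative a) :=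
  congrArg AddMonoidAlgebra.ofCoeff Finsupp.mapRange_single

theorem hbarDeriv_smul (c : ℂ) (f : WeylPoly n) : hbarDeriv n (c • f) = c • hbarDeriv n f := by
  induction f using MvPolynomial.induction_on' with
  | add p q hp hq => rw [smul_add, hbarDeriv_add, hp, hq, hbarDeriv_add, smul_add]
  | monomial s a =>
    rw [smul_monomial, hbarDeriv_monomial, hbarDeriv_monomial, Polynomial.derivative_smul,
      smul_monomial]

theorem hbarDeriv_mul (f g : WeylPoly n) :
    hbarDeriv n (f * g) = f * hbarDeriv n g + g * hbarDeriv n f := by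
  induction f using MvPolynomial.induction_on' with
  | add p q hp hq => rw [add_mul, hbarDeriv_add, hp, hq, hbarDeriv_add]; ring
  | monomial s a =>
    induction g using MvPolynomial.induction_on' with
    | add p q hp hq => rw [mul_add, hbarDeriv_add, hp, hq, hbarDeriv_add]; ring
    | monomial t b =>
      rw [monomial_mul, hbarDeriv_monomial, hbarDeriv_monomial, hbarDeriv_monomial,
        Polynomial.derivative_mul, monomial_mul, monomial_mul, add_comm t, ← map_add]
      ring_nf

def hbarDerivation (n : ℕ) : Derivation ℂ (WeylPoly n) (WeylPoly n) :=
  Derivation.mk' ({ toFun := hbarDeriv n, map_add' := hbarDeriv_add, map_smul' := hbarDeriv_smul }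
    : WeylPoly n →ₗ[ℂ] WeylPoly n) hbarDeriv_mul

def eulerDerivation (n : ℕ) : Derivation ℂ (WeylPoly n) (WeylPoly n) :=
  2 • ((C Polynomial.X : WeylPoly n) • hbarDerivation n)
    + ∑ i, (X i : WeylPoly n) • (pderiv i).restrictScalars ℂ

@[simp]
theorem coe_eulerDerivation : ⇑(eulerDerivation n) = eulerOp n := by
  funext f
  simp only [eulerDerivation, Derivation.add_apply, ← Derivation.coeFnAddMonoidHom_apply, map_sum,
    Finset.sum_apply]
  simp [eulerOp, hbarDerivation, Derivation.coeFnAddMonoidHom_apply, Derivation.smul_apply]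

theorem eulerOp_mul (f g : WeylPoly n) :
    eulerOp n (f * g) = eulerOp n f * g + f * eulerOp n g := by
  rw [← coe_eulerDerivation, Derivation.leibniz, smul_eq_mul, smul_eq_mul]
  ring

theorem eulerOp_smul (c : ℂ) (f : WeylPoly n) : eulerOp n (c • f) = c • eulerOp n f := by
  rw [← coe_eulerDerivation, Derivation.map_smul]

theorem eulerOp_sum {ι : Type*} (s : Finset ι) (F : ι → WeylPoly n) :
    eulerOp n (∑ i ∈ s, F i) = ∑ i ∈ s, eulerOp n (F i) := by
  rw [← coe_eulerDerivation, map_sum]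

theorem eulerOp_C (p : Polynomial ℂ) :
    eulerOp n (C p) = C (2 * Polynomial.X * Polynomial.derivative p) := by
  have hC : hbarDeriv n (C p) = C (Polynomial.derivative p) := hbarDeriv_monomial 0 p
  simp only [eulerOp, hC, pderiv_C, mul_zero, Finset.sum_const_zero, add_zero, two_smul, map_mul,
    map_ofNat]
  ring

theorem eulerOp_X (i : Fin (2*n)) : eulerOp n (X i) = X i := by
  classical
  have hX : hbarDeriv n (X i) = 0 := by
    rw [X, hbarDeriv_monomial, Polynomial.derivative_one, monomial_zero]
  simp [eulerOp, hX, pderiv_X, Pi.single_apply]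

theorem commutator_pderiv_eulerDerivation (i : Fin (2*n)) :
    ⁅(pderiv i : Derivation (Polynomial ℂ) (WeylPoly n) (WeylPoly n)).restrictScalars ℂ,
      eulerDerivation n⁆ = (pderiv i).restrictScalars ℂ := by
  refine derivation_ext_of_C_X (fun p => ?_) (fun j => ?_) <;>
    simp only [Derivation.commutator_apply, Derivation.restrictScalars_apply]
  · rw [pderiv_C, map_zero, sub_zero, coe_eulerDerivation, eulerOp_C, pderiv_C]
  · by_cases h : j = i
    · rw [h, pderiv_X_self, Derivation.map_one_eq_zero, sub_zero, coe_eulerDerivation, eulerOp_X,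
        pderiv_X_self]
    · rw [pderiv_X_of_ne h, map_zero, sub_zero, coe_eulerDerivation, eulerOp_X, pderiv_X_of_ne h]

theorem pderiv_eulerOp (i : Fin (2*n)) (f : WeylPoly n) :
    pderiv i (eulerOp n f) = eulerOp n (pderiv i f) + pderiv i f := by
  have := congrArg (· f) (commutator_pderiv_eulerDerivation (n := n) i)
  simp only [Derivation.commutator_apply, Derivation.restrictScalars_apply,
    coe_eulerDerivation] at this
  linear_combination this

theorem multiDeriv_eulerOp {m : ℕ} (v : Fin m → Fin (2*n)) (f : WeylPoly n) :
    multiDeriv v (eulerOp n f) = eulerOp n (multiDeriv v f) + m • multiDeriv v f := by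
  simpa [multiDeriv] using foldr_pderiv_of_commutator_eq_pderiv pderiv_eulerOp (List.ofFn v) f

def moyalCoeff (m : ℕ) : Polynomial ℂ :=
  Polynomial.C (1 / ((2:ℂ)^m * (Nat.factorial m : ℂ))) * Polynomial.X ^ m

def moyalBidiff (n m : ℕ) (f g : WeylPoly n) : WeylPoly n :=
  ∑ v : Fin m → Fin (2*n), ∑ w : Fin m → Fin (2*n),
    C (Polynomial.C (∏ s : Fin m, omegaHat n (v s) (w s))) * (multiDeriv v f * multiDeriv w g)

theorem moyal_eq_sum_range {f : WeylPoly n} (g : WeylPoly n) {N : ℕ} (hN : f.totalDegree < N) :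
    moyal n f g = ∑ m ∈ Finset.range N, C (moyalCoeff m) * moyalBidiff n m f g := by
  refine Finset.sum_subset (Finset.range_subset_range.mpr hN) fun m _ hm => ?_
  rw [Finset.mem_range, not_lt] at hm
  have hvanish (v : Fin m → Fin (2*n)) : multiDeriv v f = 0 :=
    foldr_pderiv_eq_zero_of_totalDegree_lt (by rw [List.length_ofFn]; omega)
  simp [hvanish]

theorem eulerOp_C_moyalCoeff (m : ℕ) :
    eulerOp n (C (moyalCoeff m)) = (2 * m) • C (moyalCoeff m) := by
  rw [eulerOp_C, ← map_nsmul]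
  congr 1
  rcases m with - | m
  · simp [moyalCoeff]
  · simp only [moyalCoeff, Polynomial.derivative_C_mul, Polynomial.derivative_X_pow, nsmul_eq_mul]
    push_cast [map_add, Polynomial.C_1, Polynomial.C_eq_natCast]
    ring

theorem eulerOp_moyalBidiff (m : ℕ) (f g : WeylPoly n) :
    eulerOp n (moyalBidiff n m f g) + (2 * m) • moyalBidiff n m f g
      = moyalBidiff n m (eulerOp n f) g + moyalBidiff n m f (eulerOp n g) := by
  have hC (x : ℂ) (h : WeylPoly n) : C (Polynomial.C x) * h = x • h := (Algebra.smul_def x h).symm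
  simp only [moyalBidiff, hC, eulerOp_sum, eulerOp_smul, Finset.smul_sum, ← Finset.sum_add_distrib]
  refine Finset.sum_congr rfl fun v _ => Finset.sum_congr rfl fun w _ => ?_
  rw [eulerOp_mul, multiDeriv_eulerOp, multiDeriv_eulerOp]
  simp only [add_mul, mul_add, smul_mul_assoc, mul_smul_comm]
  module

theorem eulerOp_C_moyalCoeff_mul_moyalBidiff (m : ℕ) (f g : WeylPoly n) :
    eulerOp n (C (moyalCoeff m) * moyalBidiff n m f g)
      = C (moyalCoeff m) * moyalBidiff n m (eulerOp n f) g
        + C (moyalCoeff m) * moyalBidiff n m f (eulerOp n g) := by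
  rw [eulerOp_mul, eulerOp_C_moyalCoeff, ← mul_add, ← eulerOp_moyalBidiff]
  simp only [smul_mul_assoc, mul_add, mul_smul_comm]
  abel

end Euler

theorem eulerOp_derivation_of_moyal_general (n : ℕ) (f g : WeylPoly n) :
    eulerOp n (moyal n f g) = moyal n (eulerOp n f) g + moyal n f (eulerOp n g) := by
  -- `moyal` truncates according to its first argument, so all three products are expanded
  -- up to a common bound.
  obtain ⟨N, hf, hEf⟩ : ∃ N, f.totalDegree < N ∧ (eulerOp n f).totalDegree < N :=
    ⟨max f.totalDegree (eulerOp n f).totalDegree + 1, by omega, by omega⟩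
  rw [moyal_eq_sum_range g hf, moyal_eq_sum_range g hEf, moyal_eq_sum_range (eulerOp n g) hf,
    eulerOp_sum, ← Finset.sum_add_distrib]
  exact Finset.sum_congr rfl fun m _ => eulerOp_C_moyalCoeff_mul_moyalBidiff m f g

/-- The Euler operator `D f = 2ℏ ∂_ℏ f + ∑_i y_i ∂_i f` is a derivation
of the Moyal product: `D(f ⋆ g) = (D f) ⋆ g + f ⋆ (D g)`. Equivalently, the Moyal
product is graded for the weights `wt(y_i) = 1`, `wt(ℏ) = 2`; infinitesimally this is
the identity `ℏ∂_ℏ m_ℏ + [𝔼, m_ℏ] = 0` used in the Gauss–Manin argument. -/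
theorem eulerOp_derivation_of_moyal (n : ℕ) (hn : 1 ≤ n) (f g : WeylPoly n) :
    eulerOp n (moyal n f g) = moyal n (eulerOp n f) g + moyal n f (eulerOp n g) :=
  eulerOp_derivation_of_moyal_general n f g

end
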